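/- arXiv:math/0507164 — 6 statements merged into one kernel-verified Lean document; each statement's English description precedes it below -/
import Mathlib

section
/- If a d-dimensional n×...×n matrix M avoids a d-dimensional permutation P, then any contraction of M with respect to a partition of [n] into consecutive intervals also avoids P. -/
/-- `F ≺ M`: containment of `d`-dimensional 0-1 matrices via strictly increasing
coordinate injections. -/
def Contains {d : ℕ} {k n : Fin d → ℕ} (F : Finset (∀ i, Fin (k i)))
    (M : Finset (∀ i, Fin (n i))) : Prop :=
  ∃ f : ∀ i, Fin (k i) → Fin (n i), (∀ i, StrictMono (f i)) ∧
    ∀ e ∈ F, (fun i => f i (e i)) ∈ M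

/-- A `d`-dimensional permutation of `[k]`: for every coordinate `i` and value `x`
there is exactly one edge `e ∈ P` with `e i = x`. -/
def IsPerm {d k : ℕ} (P : Finset (Fin d → Fin k)) : Prop :=
  ∀ (i : Fin d) (x : Fin k), ∃! e, e ∈ P ∧ e i = x

/-- Contraction of `M ⊆ [n]^d` with respect to a partition of `[n]` into consecutive
intervals, given as the fibers of a monotone surjection `b : Fin n → Fin r`. -/
def contraction {d n r : ℕ} (b : Fin n → Fin r) (M : Finset (Fin d → Fin n)) :
    Finset (Fin d → Fin r) :=
  M.image (fun e i => b (e i))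

/-- If `M` avoids a `d`-dimensional permutation `P`, then so does any contraction
of `M` with respect to a partition of `[n]` into consecutive intervals. -/
theorem stmt4 {d k n r : ℕ} (P : Finset (Fin d → Fin k)) (hP : IsPerm P)
    (b : Fin n → Fin r) (hmono : Monotone b) (hsurj : Function.Surjective b)
    (M : Finset (Fin d → Fin n)) (h : ¬ Contains P M) :
    ¬ Contains P (contraction b M) := by
  rintro ⟨f, hf, hfP⟩
  apply h
  choose m hmM hmb using fun e (he : e ∈ P) =>
    Finset.mem_image.mp (hfP e he)
  choose E hE using hP
  -- hE i x : (E i x ∈ P ∧ E i x i = x) ∧ ∀ y, (y ∈ P ∧ y i = x) → y = E i x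
  have hbm : ∀ (e : Fin d → Fin k) (he : e ∈ P) (i : Fin d),
      b (m e he i) = f i (e i) := by
    intro e he i
    exact congrFun (hmb e he) i
  refine ⟨fun i x => m (E i x) (hE i x).1.1 i, ?_, ?_⟩
  · intro i x y hxy
    by_contra hc
    push_neg at hc
    have h1 : b (m (E i y) (hE i y).1.1 i) ≤ b (m (E i x) (hE i x).1.1 i) :=
      hmono hc
    rw [hbm, hbm, (hE i x).1.2, (hE i y).1.2] at h1
    exact absurd h1 (not_le.mpr (hf i hxy))
  · intro e he
    have key : ∀ i, m (E i (e i)) (hE i (e i)).1.1 i = m e he i := by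
      intro i
      have h1 : e = E i (e i) := (hE i (e i)).2 e ⟨he, rfl⟩
      have : ∀ e' (h' : e' ∈ P), e' = e → m e' h' i = m e he i := by
        rintro e' h' rfl; rfl
      exact this _ _ h1.symm
    show (fun i => m (E i (e i)) (hE i (e i)).1.1 i) ∈ M
    rw [funext key]
    exact hmM e he
end

section
/- Let d ≥ 2 and m, n_0, k ∈ ℕ. Then f(mn_0, k, d) ≤ (k−1)^d · f(n_0, k, d) + d·n_0·m^d·C(m,k) · f(n_0, k, d−1), where f(n,k,d) = max_P f(n,P,d) over all d-dimensional permutations P of [k]. -/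
/-- `f(n,P,d)`: maximum size of a `d`-dimensional `n × ⋯ × n` matrix avoiding `P`. -/
noncomputable def fP {d k : ℕ} (n : ℕ) (P : Finset (Fin d → Fin k)) : ℕ :=
  sSup {m | ∃ M : Finset (Fin d → Fin n), ¬ Contains P M ∧ M.card = m}
/-- `f(n,k,d) = max over d-dimensional permutations P of [k] of f(n,P,d)`. -/
noncomputable def fK (n k d : ℕ) : ℕ :=
  sSup {m | ∃ P : Finset (Fin d → Fin k), IsPerm P ∧ m = fP n P}



lemma mem_fP_le {d k n : ℕ} (P : Finset (Fin d → Fin k)) :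
    ∀ x ∈ {m | ∃ M : Finset (Fin d → Fin n), ¬ Contains P M ∧ M.card = x},
      x ≤ Fintype.card (Fin d → Fin n) := by
  rintro x ⟨M, _, rfl⟩
  exact (Finset.card_le_univ M).trans_eq Finset.card_univ

lemma fP_le {d k n : ℕ} (P : Finset (Fin d → Fin k)) :
    fP n P ≤ Fintype.card (Fin d → Fin n) :=
  csSup_le' (mem_fP_le P)

lemma card_le_fP {d k n : ℕ} {P : Finset (Fin d → Fin k)} {M : Finset (Fin d → Fin n)}
    (h : ¬ Contains P M) : M.card ≤ fP n P :=
  le_csSup ⟨Fintype.card (Fin d → Fin n), mem_fP_le P⟩ ⟨M, h, rfl⟩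

lemma fP_le_fK {d k n : ℕ} {P : Finset (Fin d → Fin k)} (hP : IsPerm P) :
    fP n P ≤ fK n k d := by
  refine le_csSup ⟨Fintype.card (Fin d → Fin n), ?_⟩ ⟨P, hP, rfl⟩
  rintro x ⟨P', _, rfl⟩
  exact fP_le P'

lemma card_le_fK {d k n : ℕ} {P : Finset (Fin d → Fin k)} (hP : IsPerm P)
    {M : Finset (Fin d → Fin n)} (h : ¬ Contains P M) : M.card ≤ fK n k d :=
  (card_le_fP h).trans (fP_le_fK hP)

lemma fK_le {d k n : ℕ} (B : ℕ)
    (h : ∀ P : Finset (Fin d → Fin k), IsPerm P →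
      ∀ M : Finset (Fin d → Fin n), ¬ Contains P M → M.card ≤ B) :
    fK n k d ≤ B := by
  apply csSup_le'
  rintro x ⟨P, hP, rfl⟩
  apply csSup_le'
  rintro y ⟨M, hM, rfl⟩
  exact h P hP M hM

section aux
variable {e m n₀ k : ℕ}

def blkx (x : Fin (e+1) → Fin (m*n₀)) (i : Fin (e+1)) : Fin n₀ :=
  ⟨(x i : ℕ)/m, Nat.div_lt_of_lt_mul (x i).isLt⟩

def offx (hm : 0 < m) (x : Fin (e+1) → Fin (m*n₀)) (i : Fin (e+1)) : Fin m :=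
  ⟨(x i : ℕ) % m, Nat.mod_lt _ hm⟩

lemma val_eq_blk_off (hm : 0 < m) (x : Fin (e+1) → Fin (m*n₀)) (i : Fin (e+1)) :
    (x i : ℕ) = m * (blkx x i : ℕ) + (offx hm x i : ℕ) :=
  (Nat.div_add_mod _ _).symm

lemma lt_of_blk_lt {p q : Fin (e+1) → Fin (m*n₀)} {i : Fin (e+1)}
    (h : blkx p i < blkx q i) : p i < q i :=
  Nat.lt_of_div_lt_div h

lemma eq_of_blk_off (hm : 0 < m) {p q : Fin (e+1) → Fin (m*n₀)}
    (hb : blkx p = blkx q) (ho : offx hm p = offx hm q) : p = q := by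
  funext i
  have h1 := val_eq_blk_off hm p i
  have h2 := val_eq_blk_off hm q i
  apply Fin.ext
  rw [h1, h2, hb, ho]

open Classical in
noncomputable def Ox (hm : 0 < m) (M : Finset (Fin (e+1) → Fin (m*n₀))) (i : Fin (e+1))
    (b : Fin (e+1) → Fin n₀) : Finset (Fin m) :=
  (M.filter (fun x => blkx x = b)).image (fun x => offx hm x i)

open Classical in
lemma fiber_card_le_prod (hm : 0 < m) (M : Finset (Fin (e+1) → Fin (m*n₀)))
    (b : Fin (e+1) → Fin n₀) :
    (M.filter (fun x => blkx x = b)).card ≤ ∏ i, (Ox hm M i b).card := by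
  rw [← Fintype.card_piFinset]
  apply Finset.card_le_card_of_injOn (fun x => offx hm x)
  · intro x hx
    rw [Finset.mem_coe, Fintype.mem_piFinset]
    intro i
    exact Finset.mem_image_of_mem _ hx
  · intro x hx y hy hxy
    simp only [Finset.mem_coe, Finset.mem_filter] at hx hy
    exact eq_of_blk_off hm (hx.2.trans hy.2.symm) hxy

lemma perm_proj (i : Fin (e+1)) (P : Finset (Fin (e+1) → Fin k)) (hP : IsPerm P) :
    IsPerm (P.image (fun u (j : Fin e) => u (i.succAbove j))) := by
  classical
  intro j x
  obtain ⟨u, ⟨huP, hux⟩, huniq⟩ := hP (i.succAbove j) x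
  refine ⟨fun j' => u (i.succAbove j'), ⟨Finset.mem_image_of_mem _ huP, hux⟩, ?_⟩
  rintro y ⟨hy, hyx⟩
  rw [Finset.mem_image] at hy
  obtain ⟨w, hwP, rfl⟩ := hy
  rw [huniq w ⟨hwP, hyx⟩]

lemma proj_inj {n₀ : ℕ} (i : Fin (e+1)) (a : Fin n₀) {b b' : Fin (e+1) → Fin n₀}
    (hb : b i = a) (hb' : b' i = a)
    (h : (fun j => b (i.succAbove j)) = fun j => b' (i.succAbove j)) : b = b' := by
  funext j'
  by_cases hj : j' = i
  · rw [hj, hb, hb']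
  · obtain ⟨j, hj2⟩ := Fin.exists_succAbove_eq hj
    rw [← hj2]
    exact congrFun h j

end aux

section main
variable {e m n₀ k : ℕ}

open Classical in
lemma claimA (hm : 0 < m) (hn : 0 < n₀)
    (P : Finset (Fin (e+1) → Fin k)) (hP : IsPerm P)
    (M : Finset (Fin (e+1) → Fin (m*n₀))) (hM : ¬ Contains P M) :
    ¬ Contains P (Finset.univ.filter
      (fun b : Fin (e+1) → Fin n₀ => (M.filter (fun x => blkx x = b)).Nonempty)) := by
  rintro ⟨g, hmono, hedge⟩
  apply hM
  have hpt : ∀ u : Fin (e+1) → Fin k, ∃ p : Fin (e+1) → Fin (m*n₀),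
      u ∈ P → p ∈ M ∧ blkx p = fun i => g i (u i) := by
    intro u
    by_cases hu : u ∈ P
    · have hmem := hedge u hu
      rw [Finset.mem_filter] at hmem
      obtain ⟨p, hp⟩ := hmem.2
      rw [Finset.mem_filter] at hp
      exact ⟨p, fun _ => ⟨hp.1, hp.2⟩⟩
    · exact ⟨fun _ => ⟨0, Nat.mul_pos hm hn⟩, fun h => absurd h hu⟩
  choose pt hpt using hpt
  refine ⟨fun i v => pt ((hP i v).choose) i, ?_, ?_⟩
  · intro i v v' hvv'
    have h1 := ((hP i v).choose_spec).1
    have h1' := ((hP i v').choose_spec).1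
    have e1 : blkx (pt (hP i v).choose) i = g i v := by
      rw [(hpt _ h1.1).2]
      simp only []
      rw [h1.2]
    have e1' : blkx (pt (hP i v').choose) i = g i v' := by
      rw [(hpt _ h1'.1).2]
      simp only []
      rw [h1'.2]
    exact lt_of_blk_lt (p := pt ((hP i v).choose)) (q := pt ((hP i v').choose))
      (by rw [e1, e1']; exact hmono i hvv')
  · intro u hu
    have hgoal : (fun i => pt ((hP i (u i)).choose) i) = pt u := by
      funext i
      rw [← ((hP i (u i)).choose_spec).2 u ⟨hu, rfl⟩]
    show (fun i => pt ((hP i (u i)).choose) i) ∈ M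
    rw [hgoal]
    exact (hpt u hu).1

open Classical in
lemma wideA (hm : 0 < m) (hn : 0 < n₀)
    (P : Finset (Fin (e+1) → Fin k)) (hP : IsPerm P)
    (M : Finset (Fin (e+1) → Fin (m*n₀))) (hM : ¬ Contains P M)
    (i : Fin (e+1)) (a : Fin n₀) (S₀ : Finset (Fin m)) (hS₀ : S₀.card = k) :
    ¬ Contains (P.image (fun u (j : Fin e) => u (i.succAbove j)))
      ((Finset.univ.filter
          (fun b : Fin (e+1) → Fin n₀ => b i = a ∧ S₀ ⊆ Ox hm M i b)).image
        (fun b (j : Fin e) => b (i.succAbove j))) := by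
  rintro ⟨g, hmono, hedge⟩
  apply hM
  set s : Fin k ↪o Fin m := S₀.orderEmbOfFin hS₀ with hs
  have hpt : ∀ u : Fin (e+1) → Fin k, ∃ p : Fin (e+1) → Fin (m*n₀), u ∈ P →
      p ∈ M ∧ offx hm p i = s (u i) ∧ blkx p i = a ∧
      ∀ j : Fin e, blkx p (i.succAbove j) = g j (u (i.succAbove j)) := by
    intro u
    by_cases hu : u ∈ P
    · have hmem := hedge _ (Finset.mem_image_of_mem _ hu)
      rw [Finset.mem_image] at hmem
      obtain ⟨b, hbW, hb⟩ := hmem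
      rw [Finset.mem_filter] at hbW
      obtain ⟨-, hbi, hbS⟩ := hbW
      have hsu : s (u i) ∈ Ox hm M i b := hbS (S₀.orderEmbOfFin_mem hS₀ (u i))
      rw [Ox, Finset.mem_image] at hsu
      obtain ⟨p, hp, hpo⟩ := hsu
      rw [Finset.mem_filter] at hp
      refine ⟨p, fun _ => ⟨hp.1, hpo, ?_, ?_⟩⟩
      · rw [hp.2]; exact hbi
      · intro j
        rw [hp.2]
        exact congrFun hb j
    · exact ⟨fun _ => ⟨0, Nat.mul_pos hm hn⟩, fun h => absurd h hu⟩
  choose pt hpt using hpt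
  have hbound : ∀ v : Fin k, (a : ℕ) * m + (s v : ℕ) < m * n₀ := by
    intro v
    have h1 : (s v : ℕ) < m := (s v).isLt
    have h3 : (a : ℕ) + 1 ≤ n₀ := a.isLt
    calc (a : ℕ) * m + (s v : ℕ) < (a : ℕ) * m + m := Nat.add_lt_add_left h1 _
      _ = ((a : ℕ) + 1) * m := by ring
      _ ≤ n₀ * m := Nat.mul_le_mul_right m h3
      _ = m * n₀ := mul_comm _ _
  refine ⟨fun i' v => if h : i' = i then ⟨(a : ℕ) * m + (s v : ℕ), hbound v⟩
      else pt ((hP i' v).choose) i', ?_, ?_⟩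
  · intro i' v v' hvv'
    by_cases h : i' = i
    · simp only [dif_pos h]
      have hsv : (s v : ℕ) < s v' := s.strictMono hvv'
      exact Fin.mk_lt_mk.mpr (Nat.add_lt_add_left hsv _)
    · simp only [dif_neg h]
      obtain ⟨j, hj⟩ := Fin.exists_succAbove_eq h
      have h1 := ((hP i' v).choose_spec).1
      have h1' := ((hP i' v').choose_spec).1
      have e1 : blkx (pt (hP i' v).choose) i' = g j v := by
        have h2 := (hpt _ h1.1).2.2.2 j
        rw [hj] at h2
        rw [h2, h1.2]
      have e1' : blkx (pt (hP i' v').choose) i' = g j v' := by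
        have h2 := (hpt _ h1'.1).2.2.2 j
        rw [hj] at h2
        rw [h2, h1'.2]
      exact lt_of_blk_lt (p := pt ((hP i' v).choose)) (q := pt ((hP i' v').choose))
        (by rw [e1, e1']; exact hmono j hvv')
  · intro u hu
    have hgoal : (fun i' => if h : i' = i then
        (⟨(a : ℕ) * m + (s (u i') : ℕ), hbound (u i')⟩ : Fin (m * n₀))
        else pt ((hP i' (u i')).choose) i') = pt u := by
      funext i'
      by_cases h : i' = i
      · subst h
        simp only [dif_pos]
        have hv := val_eq_blk_off hm (pt u) i'
        rw [(hpt u hu).2.2.1, (hpt u hu).2.1] at hv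
        apply Fin.ext
        show (a : ℕ) * m + (s (u i') : ℕ) = (pt u i' : ℕ)
        rw [hv, Nat.mul_comm]
      · simp only [dif_neg h]
        rw [← ((hP i' (u i')).choose_spec).2 u ⟨hu, rfl⟩]
    show (fun i' => if h : i' = i then
        (⟨(a : ℕ) * m + (s (u i') : ℕ), hbound (u i')⟩ : Fin (m * n₀))
        else pt ((hP i' (u i')).choose) i') ∈ M
    rw [hgoal]
    exact (hpt u hu).1

open Classical in
lemma core (hm : 0 < m) (hn : 0 < n₀)
    (P : Finset (Fin (e+1) → Fin k)) (hP : IsPerm P)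
    (M : Finset (Fin (e+1) → Fin (m * n₀))) (hM : ¬ Contains P M) :
    M.card ≤ (k-1)^(e+1) * fK n₀ k (e+1) +
      (e+1) * n₀ * m^(e+1) * Nat.choose m k * fK n₀ k e := by
  classical
  set fib : (Fin (e+1) → Fin n₀) → Finset (Fin (e+1) → Fin (m*n₀)) :=
    fun b => M.filter (fun x => blkx x = b) with hfib
  have hsum : M.card = ∑ b : Fin (e+1) → Fin n₀, (fib b).card :=
    Finset.card_eq_sum_card_fiberwise (fun x _ => Finset.mem_univ (blkx x))
  set S := Finset.univ.filter
    (fun b : Fin (e+1) → Fin n₀ => (fib b).Nonempty ∧ ∀ i, (Ox hm M i b).card < k) with hSdef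
  set W := Finset.univ.filter
    (fun b : Fin (e+1) → Fin n₀ => ∃ i, k ≤ (Ox hm M i b).card) with hWdef
  have hsum2 : ∑ b ∈ S ∪ W, (fib b).card = ∑ b : Fin (e+1) → Fin n₀, (fib b).card := by
    apply Finset.sum_subset (Finset.subset_univ _)
    intro b _ hb
    rw [Finset.mem_union] at hb
    push_neg at hb
    by_contra hc
    have hne : (fib b).Nonempty := Finset.card_pos.mp (Nat.pos_of_ne_zero hc)
    have hbS := hb.1
    have hbW := hb.2
    rw [hSdef, Finset.mem_filter] at hbS
    rw [hWdef, Finset.mem_filter] at hbW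
    push_neg at hbS hbW
    obtain ⟨i, hi⟩ := hbS (Finset.mem_univ b) hne
    exact absurd (hbW (Finset.mem_univ b) i) (not_lt.mpr hi)
  have hdisj : Disjoint S W := by
    rw [Finset.disjoint_left]
    intro b hbS hbW
    rw [hSdef, Finset.mem_filter] at hbS
    rw [hWdef, Finset.mem_filter] at hbW
    obtain ⟨i, hi⟩ := hbW.2
    exact absurd (hbS.2.2 i) (not_lt.mpr hi)
  -- small blocks
  have hScard : S.card ≤ fK n₀ k (e+1) := by
    have hsubNB : S ⊆ Finset.univ.filter
        (fun b : Fin (e+1) → Fin n₀ => (fib b).Nonempty) := by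
      intro b hb
      rw [hSdef, Finset.mem_filter] at hb
      rw [Finset.mem_filter]
      exact ⟨hb.1, hb.2.1⟩
    exact (Finset.card_le_card hsubNB).trans
      (card_le_fK hP (claimA hm hn P hP M hM))
  have hSbound : ∑ b ∈ S, (fib b).card ≤ fK n₀ k (e+1) * (k-1)^(e+1) := by
    have h1 : ∀ b ∈ S, (fib b).card ≤ (k-1)^(e+1) := by
      intro b hb
      rw [hSdef, Finset.mem_filter] at hb
      refine (fiber_card_le_prod hm M b).trans ?_
      calc ∏ i, (Ox hm M i b).card ≤ ∏ _i : Fin (e+1), (k-1) :=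
            Finset.prod_le_prod' (fun i _ => Nat.le_sub_one_of_lt (hb.2.2 i))
        _ = (k-1)^(e+1) := by simp
    calc ∑ b ∈ S, (fib b).card ≤ S.card * (k-1)^(e+1) := by
          simpa [smul_eq_mul] using Finset.sum_le_card_nsmul S _ _ h1
      _ ≤ fK n₀ k (e+1) * (k-1)^(e+1) := Nat.mul_le_mul_right _ hScard
  -- wide blocks
  have hWAS : ∀ (i : Fin (e+1)) (a : Fin n₀) (S₀ : Finset (Fin m)), S₀.card = k →
      (Finset.univ.filter
        (fun b : Fin (e+1) → Fin n₀ => b i = a ∧ S₀ ⊆ Ox hm M i b)).card ≤ fK n₀ k e := by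
    intro i a S₀ hS₀
    have hinj : Set.InjOn (fun (b : Fin (e+1) → Fin n₀) (j : Fin e) => b (i.succAbove j))
        ↑(Finset.univ.filter
          (fun b : Fin (e+1) → Fin n₀ => b i = a ∧ S₀ ⊆ Ox hm M i b)) := by
      intro b hb b' hb' hbb'
      simp only [Finset.coe_filter, Set.mem_setOf_eq] at hb hb'
      exact proj_inj i a hb.2.1 hb'.2.1 hbb'
    rw [← Finset.card_image_of_injOn hinj]
    exact card_le_fK (perm_proj i P hP) (wideA hm hn P hP M hM i a S₀ hS₀)
  have hWidei : ∀ i : Fin (e+1),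
      (Finset.univ.filter
        (fun b : Fin (e+1) → Fin n₀ => k ≤ (Ox hm M i b).card)).card ≤
        n₀ * (Nat.choose m k * fK n₀ k e) := by
    intro i
    have hsub2 : (Finset.univ.filter
        (fun b : Fin (e+1) → Fin n₀ => k ≤ (Ox hm M i b).card)) ⊆
        (Finset.univ : Finset (Fin n₀)).biUnion (fun a =>
          ((Finset.univ : Finset (Fin m)).powersetCard k).biUnion (fun S₀ =>
            Finset.univ.filter
              (fun b : Fin (e+1) → Fin n₀ => b i = a ∧ S₀ ⊆ Ox hm M i b))) := by
      intro b hb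
      rw [Finset.mem_filter] at hb
      obtain ⟨S₀, hS₀sub, hS₀card⟩ := Finset.exists_subset_card_eq hb.2
      rw [Finset.mem_biUnion]
      refine ⟨b i, Finset.mem_univ _, ?_⟩
      rw [Finset.mem_biUnion]
      refine ⟨S₀, ?_, ?_⟩
      · rw [Finset.mem_powersetCard]
        exact ⟨Finset.subset_univ _, hS₀card⟩
      · rw [Finset.mem_filter]
        exact ⟨Finset.mem_univ _, rfl, hS₀sub⟩
    calc (Finset.univ.filter
        (fun b : Fin (e+1) → Fin n₀ => k ≤ (Ox hm M i b).card)).card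
        ≤ _ := Finset.card_le_card hsub2
      _ ≤ ∑ a : Fin n₀, (((Finset.univ : Finset (Fin m)).powersetCard k).biUnion (fun S₀ =>
            Finset.univ.filter
              (fun b : Fin (e+1) → Fin n₀ => b i = a ∧ S₀ ⊆ Ox hm M i b))).card :=
        Finset.card_biUnion_le
      _ ≤ ∑ _a : Fin n₀, (Nat.choose m k * fK n₀ k e) := by
          apply Finset.sum_le_sum
          intro a _
          calc _ ≤ ∑ S₀ ∈ (Finset.univ : Finset (Fin m)).powersetCard k,
                (Finset.univ.filter
                  (fun b : Fin (e+1) → Fin n₀ => b i = a ∧ S₀ ⊆ Ox hm M i b)).card :=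
              Finset.card_biUnion_le
            _ ≤ ∑ S₀ ∈ (Finset.univ : Finset (Fin m)).powersetCard k, fK n₀ k e := by
              apply Finset.sum_le_sum
              intro S₀ hS₀
              rw [Finset.mem_powersetCard] at hS₀
              exact hWAS i a S₀ hS₀.2
            _ = Nat.choose m k * fK n₀ k e := by
              rw [Finset.sum_const, smul_eq_mul, Finset.card_powersetCard]
              simp
      _ = n₀ * (Nat.choose m k * fK n₀ k e) := by simp [mul_comm]
  have hWbound : ∑ b ∈ W, (fib b).card ≤
      ((e+1) * (n₀ * (Nat.choose m k * fK n₀ k e))) * m^(e+1) := by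
    have hcb : ∀ b ∈ W, (fib b).card ≤ m^(e+1) := by
      intro b _
      refine (fiber_card_le_prod hm M b).trans ?_
      calc ∏ i, (Ox hm M i b).card ≤ ∏ _i : Fin (e+1), m :=
          Finset.prod_le_prod' (fun i _ =>
            (Finset.card_le_univ _).trans_eq (by simp))
        _ = m^(e+1) := by simp
    have hWcard : W.card ≤ (e+1) * (n₀ * (Nat.choose m k * fK n₀ k e)) := by
      have hsub3 : W ⊆ Finset.univ.biUnion (fun i : Fin (e+1) =>
          Finset.univ.filter
            (fun b : Fin (e+1) → Fin n₀ => k ≤ (Ox hm M i b).card)) := by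
        intro b hb
        rw [hWdef, Finset.mem_filter] at hb
        obtain ⟨i, hi⟩ := hb.2
        rw [Finset.mem_biUnion]
        exact ⟨i, Finset.mem_univ _, by rw [Finset.mem_filter]; exact ⟨Finset.mem_univ _, hi⟩⟩
      calc W.card ≤ _ := Finset.card_le_card hsub3
        _ ≤ ∑ i : Fin (e+1), (Finset.univ.filter
            (fun b : Fin (e+1) → Fin n₀ => k ≤ (Ox hm M i b).card)).card :=
          Finset.card_biUnion_le
        _ ≤ ∑ _i : Fin (e+1), (n₀ * (Nat.choose m k * fK n₀ k e)) :=
          Finset.sum_le_sum (fun i _ => hWidei i)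
        _ = (e+1) * (n₀ * (Nat.choose m k * fK n₀ k e)) := by simp [mul_comm]
    calc ∑ b ∈ W, (fib b).card ≤ W.card * m^(e+1) := by
          simpa [smul_eq_mul] using Finset.sum_le_card_nsmul W _ _ hcb
      _ ≤ ((e+1) * (n₀ * (Nat.choose m k * fK n₀ k e))) * m^(e+1) :=
          Nat.mul_le_mul_right _ hWcard
  rw [hsum, ← hsum2, Finset.sum_union hdisj]
  refine (Nat.add_le_add hSbound hWbound).trans (le_of_eq ?_)
  ring

end main


/-- The key recursive inequality:
`f(m n₀, k, d) ≤ (k-1)^d f(n₀,k,d) + d n₀ m^d C(m,k) f(n₀,k,d-1)`. -/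
theorem stmt11 (d m n₀ k : ℕ) (hd : 2 ≤ d) :
    fK (m * n₀) k d ≤
      (k - 1) ^ d * fK n₀ k d +
        d * n₀ * m ^ d * Nat.choose m k * fK n₀ k (d - 1) := by
  obtain ⟨e, rfl⟩ : ∃ e, d = e + 1 := ⟨d - 1, by omega⟩
  simp only [Nat.add_sub_cancel]
  rcases Nat.eq_zero_or_pos m with rfl | hm
  · apply fK_le
    intro P _ M _
    have : M = ∅ := by
      apply Finset.eq_empty_of_forall_notMem
      intro x hx
      have := (x ⟨0, Nat.succ_pos e⟩).isLt
      omega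
    simp [this]
  rcases Nat.eq_zero_or_pos n₀ with rfl | hn
  · apply fK_le
    intro P _ M _
    have : M = ∅ := by
      apply Finset.eq_empty_of_forall_notMem
      intro x hx
      have := (x ⟨0, Nat.succ_pos e⟩).isLt
      omega
    simp [this]
  apply fK_le
  intro P hP M hM
  exact core hm hn P hP M hM
end

section
/- For every fixed d-dimensional permutation P of [k], f(n,P,d) = O(n^{d−1}); i.e., there is a constant c = c(k,d) such that every P-avoiding d-dimensional 0-1 matrix with side length n has at most c·n^{d−1} edges. -/
namespace Stmt13

def blk {s n m : ℕ} (h : n ≤ s * m) (x : Fin n) : Fin m :=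
  ⟨(x : ℕ) / s, Nat.div_lt_of_lt_mul (lt_of_lt_of_le x.2 h)⟩

lemma lt_of_blk_lt {s n m : ℕ} (h : n ≤ s * m) {x y : Fin n}
    (hxy : blk h x < blk h y) : x < y := by
  by_contra hc
  have h2 : (y : ℕ) ≤ (x : ℕ) := by simpa using Nat.le_of_not_lt hc
  have := Nat.div_le_div_right (c := s) h2
  have hlt : (x : ℕ) / s < (y : ℕ) / s := hxy
  omega

def Mblock {d s n m : ℕ} (h : n ≤ s * m) (M : Finset (Fin d → Fin n))
    (v : Fin d → Fin m) : Finset (Fin d → Fin n) :=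
  M.filter (fun p => ∀ j, blk h (p j) = v j)

def Vals {d s n m : ℕ} (h : n ≤ s * m) (M : Finset (Fin d → Fin n)) (i : Fin d)
    (v : Fin d → Fin m) : Finset (Fin n) :=
  (Mblock h M v).image (fun p => p i)

def proj {d k : ℕ} (P : Finset (Fin (d+1) → Fin k)) (i : Fin (d+1)) :
    Finset (Fin d → Fin k) :=
  P.image (fun e j => e (i.succAbove j))

lemma proj_isPerm {d k : ℕ} {P : Finset (Fin (d+1) → Fin k)} (hP : IsPerm P)
    (i : Fin (d+1)) : IsPerm (proj P i) := by
  intro j x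
  obtain ⟨e, ⟨heP, hej⟩, heu⟩ := hP (i.succAbove j) x
  refine ⟨fun j' => e (i.succAbove j'), ⟨Finset.mem_image_of_mem _ heP, hej⟩, ?_⟩
  rintro q ⟨hq, hqj⟩
  rcases Finset.mem_image.1 hq with ⟨e', he', rfl⟩
  have : e' = e := heu e' ⟨he', hqj⟩
  subst this; rfl

theorem ctr_avoids {d k s n m : ℕ} (P : Finset (Fin d → Fin k)) (hP : IsPerm P)
    (h : n ≤ s * m) (M : Finset (Fin d → Fin n)) (hM : ¬ Contains P M) :
    ¬ Contains P (M.image (fun p j => blk h (p j))) := by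
  rintro ⟨f, hf, hfP⟩
  apply hM
  choose E hEP hEj using fun (j : Fin d) (x : Fin k) => (hP j x).exists
  have hEu : ∀ (j : Fin d) (x : Fin k) (e : Fin d → Fin k), e ∈ P → e j = x → e = E j x :=
    fun j x e he hx => (hP j x).unique ⟨he, hx⟩ ⟨hEP j x, hEj j x⟩
  have hpe : ∀ e ∈ P, ∃ p, p ∈ M ∧ (fun j => blk h (p j)) = (fun j => f j (e j)) := by
    intro e he
    rcases Finset.mem_image.1 (hfP e he) with ⟨p, hp, hpe⟩
    exact ⟨p, hp, hpe⟩
  choose pe hpeM hpeB using hpe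
  refine ⟨fun j x => pe (E j x) (hEP j x) j, ?_, ?_⟩
  · intro j x y hxy
    have hbx : blk h (pe (E j x) (hEP j x) j) = f j x := by
      have := congrFun (hpeB (E j x) (hEP j x)) j
      rw [this, hEj j x]
    have hby : blk h (pe (E j y) (hEP j y) j) = f j y := by
      have := congrFun (hpeB (E j y) (hEP j y)) j
      rw [this, hEj j y]
    apply lt_of_blk_lt h
    rw [hbx, hby]
    exact hf j hxy
  · intro e he
    have heq : (fun j => pe (E j (e j)) (hEP j (e j)) j) = pe e he := by
      funext j
      have h2 : ∀ (e' : Fin d → Fin k) (he' : e' ∈ P), e' = e → pe e' he' j = pe e he j := by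
        rintro e' he' rfl; rfl
      exact h2 _ _ (hEu j (e j) e he rfl).symm
    rw [heq]
    exact hpeM e he

theorem slab_avoids {d k s n m : ℕ} (P : Finset (Fin (d+1) → Fin k)) (hP : IsPerm P)
    (h : n ≤ s * m) (M : Finset (Fin (d+1) → Fin n)) (hM : ¬ Contains P M)
    (i : Fin (d+1)) (c : Fin m) (T : Finset (Fin n)) (hT : T.card = k) :
    ¬ Contains (proj P i)
      ((Finset.univ : Finset (Fin d → Fin m)).filter
        (fun w => T ⊆ (M.filter
            (fun p => ∀ j, blk h (p j) = i.insertNth (α := fun _ => Fin m) c w j)).image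
              (fun p => p i))) := by
  rintro ⟨u, hu, huP⟩
  apply hM
  set t := T.orderEmbOfFin hT with ht
  choose E hEP hEj using fun (j : Fin (d+1)) (x : Fin k) => (hP j x).exists
  have hEu : ∀ (j : Fin (d+1)) (x : Fin k) (e : Fin (d+1) → Fin k),
      e ∈ P → e j = x → e = E j x :=
    fun j x e he hx => (hP j x).unique ⟨he, hx⟩ ⟨hEP j x, hEj j x⟩
  have key : ∀ e ∈ P, ∃ p, p ∈ M ∧
      (∀ j, blk h (p j) = i.insertNth (α := fun _ => Fin m) c
        (fun j' => u j' (e (i.succAbove j'))) j) ∧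
      p i = t (e i) := by
    intro e he
    have hq : (fun j' => e (i.succAbove j')) ∈ proj P i := Finset.mem_image_of_mem _ he
    have hw := huP _ hq
    rw [Finset.mem_filter] at hw
    have hmem : t (e i) ∈ (M.filter (fun p => ∀ j, blk h (p j) =
        i.insertNth (α := fun _ => Fin m) c
          (fun j' => u j' (e (i.succAbove j'))) j)).image (fun p => p i) :=
      hw.2 (T.orderEmbOfFin_mem hT (e i))
    rcases Finset.mem_image.1 hmem with ⟨p, hp, hpi⟩
    rw [Finset.mem_filter] at hp
    exact ⟨p, hp.1, hp.2, hpi⟩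
  choose p hpM hpB hpi using key
  classical
  refine ⟨fun j x => if hji : j = i then t x else p (E j x) (hEP j x) j, ?_, ?_⟩
  · intro j x y hxy
    by_cases hji : j = i
    · simpa [hji] using t.strictMono hxy
    · simp only [dif_neg hji]
      obtain ⟨j', hj'⟩ := Fin.exists_succAbove_eq hji
      apply lt_of_blk_lt h
      have hbx : blk h (p (E j x) (hEP j x) j) = u j' x := by
        have := hpB (E j x) (hEP j x) j
        rw [this, ← hj', Fin.insertNth_apply_succAbove, hj', hEj j x]
      have hby : blk h (p (E j y) (hEP j y) j) = u j' y := by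
        have := hpB (E j y) (hEP j y) j
        rw [this, ← hj', Fin.insertNth_apply_succAbove, hj', hEj j y]
      rw [hbx, hby]
      exact hu j' hxy
  · intro e he
    have heq : (fun j => if hji : j = i then t (e j)
        else p (E j (e j)) (hEP j (e j)) j) = p e he := by
      funext j
      by_cases hji : j = i
      · subst hji
        simp [hpi e he]
      · simp only [dif_neg hji]
        have h2 : ∀ (e' : Fin (d+1) → Fin k) (he' : e' ∈ P), e' = e →
            p e' he' j = p e he j := by rintro e' he' rfl; rfl
        exact h2 _ _ (hEu j (e j) e he rfl).symm
    rw [heq]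
    exact hpM e he

theorem fP_le {d k n B : ℕ} (P : Finset (Fin d → Fin k))
    (h : ∀ M : Finset (Fin d → Fin n), ¬ Contains P M → M.card ≤ B) : fP n P ≤ B := by
  apply csSup_le'
  rintro x ⟨M, hM, rfl⟩
  exact h M hM

theorem le_fP {d k n : ℕ} (P : Finset (Fin d → Fin k)) (M : Finset (Fin d → Fin n))
    (hM : ¬ Contains P M) : M.card ≤ fP n P := by
  apply le_csSup
  · exact ⟨Fintype.card (Fin d → Fin n), by rintro x ⟨M', _, rfl⟩; exact Finset.card_le_univ M'⟩
  · exact ⟨M, hM, rfl⟩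

theorem step {d k s n m : ℕ} (hs : 0 < s) (P : Finset (Fin (d+1) → Fin k)) (hP : IsPerm P)
    (h : n ≤ s * m) (M : Finset (Fin (d+1) → Fin n)) (hM : ¬ Contains P M)
    (cQ : ℕ)
    (hQ : ∀ (i : Fin (d+1)) (S : Finset (Fin d → Fin m)),
      ¬ Contains (proj P i) S → S.card ≤ cQ) :
    M.card ≤ (k-1)^(d+1) * fP m P + s^(d+1) * ((d+1) * (m * (2^s * cQ))) := by
  classical
  set ctr : Finset (Fin (d+1) → Fin m) := M.image (fun p j => blk h (p j)) with hctr_def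
  -- partition
  have hpart : M = ctr.biUnion (Mblock h M) := by
    ext p
    constructor
    · intro hp
      refine Finset.mem_biUnion.2 ⟨fun j => blk h (p j), Finset.mem_image_of_mem _ hp, ?_⟩
      exact Finset.mem_filter.2 ⟨hp, fun j => rfl⟩
    · intro hp
      rcases Finset.mem_biUnion.1 hp with ⟨v, _, hpv⟩
      exact (Finset.mem_filter.1 hpv).1
  have hdisj : ∀ v ∈ ctr, ∀ v' ∈ ctr, v ≠ v' → Disjoint (Mblock h M v) (Mblock h M v') := by
    intro v _ v' _ hvv'
    rw [Finset.disjoint_left]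
    intro p hp hp'
    apply hvv'
    funext j
    rw [← (Finset.mem_filter.1 hp).2 j, (Finset.mem_filter.1 hp').2 j]
  have hcardsum : M.card = ∑ v ∈ ctr, (Mblock h M v).card := by
    conv_lhs => rw [hpart]
    exact Finset.card_biUnion hdisj
  -- broad predicate
  set Bd : (Fin (d+1) → Fin m) → Prop := fun v => ∃ i, k ≤ (Vals h M i v).card with hBd_def
  have hsplit : M.card = (∑ v ∈ ctr.filter Bd, (Mblock h M v).card)
      + ∑ v ∈ ctr.filter (fun v => ¬ Bd v), (Mblock h M v).card := by
    rw [hcardsum, Finset.sum_filter_add_sum_filter_not]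
  -- non-broad blocks are small
  have hnb : ∀ v, ¬ Bd v → (Mblock h M v).card ≤ (k-1)^(d+1) := by
    intro v hv
    simp only [hBd_def, not_exists, not_le] at hv
    have hsub : Mblock h M v ⊆ Fintype.piFinset (fun i => Vals h M i v) := by
      intro p hp
      rw [Fintype.mem_piFinset]
      intro i
      exact Finset.mem_image_of_mem _ hp
    calc (Mblock h M v).card ≤ (Fintype.piFinset (fun i => Vals h M i v)).card :=
          Finset.card_le_card hsub
      _ = ∏ i, (Vals h M i v).card := Fintype.card_piFinset _
      _ ≤ ∏ _i : Fin (d+1), (k-1) := by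
          apply Finset.prod_le_prod'
          intro i _
          have := hv i
          omega
      _ = (k-1)^(d+1) := by rw [Finset.prod_const, Finset.card_univ, Fintype.card_fin]
  -- any block is at most s^(d+1)
  have hrange : ∀ c : Fin m, (Finset.univ.filter (fun x : Fin n => blk h x = c)).card ≤ s := by
    intro c
    have hinj : Set.InjOn (fun x : Fin n => (⟨(x : ℕ) % s, Nat.mod_lt _ hs⟩ : Fin s))
        (Finset.univ.filter (fun x : Fin n => blk h x = c)) := by
      intro x hx y hy hxy
      simp only [Finset.coe_filter, Set.mem_setOf_eq] at hx hy
      have hx2 : (x : ℕ) / s = (c : ℕ) := congrArg Fin.val hx.2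
      have hy2 : (y : ℕ) / s = (c : ℕ) := congrArg Fin.val hy.2
      have hxy2 : (x : ℕ) % s = (y : ℕ) % s := congrArg Fin.val hxy
      have h1 := Nat.div_add_mod (x : ℕ) s
      have h2 := Nat.div_add_mod (y : ℕ) s
      have : (x : ℕ) = (y : ℕ) := by
        rw [← h1, ← h2, hx2, hy2, hxy2]
      exact Fin.ext this
    have := Finset.card_le_card_of_injOn _ (fun a _ => Finset.mem_univ _) hinj
    simpa using this
  have hbk : ∀ v, (Mblock h M v).card ≤ s^(d+1) := by
    intro v
    have hsub : Mblock h M v ⊆ Fintype.piFinset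
        (fun i => Finset.univ.filter (fun x : Fin n => blk h x = v i)) := by
      intro p hp
      rw [Fintype.mem_piFinset]
      intro i
      exact Finset.mem_filter.2 ⟨Finset.mem_univ _, (Finset.mem_filter.1 hp).2 i⟩
    calc (Mblock h M v).card ≤ _ := Finset.card_le_card hsub
      _ = ∏ i, (Finset.univ.filter (fun x : Fin n => blk h x = v i)).card :=
          Fintype.card_piFinset _
      _ ≤ ∏ _i : Fin (d+1), s := Finset.prod_le_prod' (fun i _ => hrange (v i))
      _ = s^(d+1) := by rw [Finset.prod_const, Finset.card_univ, Fintype.card_fin]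
  -- counting broad blocks
  have hBBcount : ∀ i : Fin (d+1),
      (Finset.univ.filter (fun v : Fin (d+1) → Fin m => k ≤ (Vals h M i v).card)).card
        ≤ m * (2^s * cQ) := by
    intro i
    set ST : Fin m → Finset (Fin n) → Finset (Fin d → Fin m) := fun c T =>
      Finset.univ.filter
        (fun w => T ⊆ (M.filter
            (fun p => ∀ j, blk h (p j) = i.insertNth (α := fun _ => Fin m) c w j)).image
              (fun p => p i)) with hST_def
    have hsub : Finset.univ.filter (fun v : Fin (d+1) → Fin m => k ≤ (Vals h M i v).card)
        ⊆ Finset.univ.biUnion (fun c : Fin m =>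
            (((Finset.univ.filter (fun x : Fin n => blk h x = c)).powersetCard k).biUnion
              (fun T => ST c T)).image (i.insertNth (α := fun _ => Fin m) c)) := by
      intro v hv
      have hvk : k ≤ (Vals h M i v).card := (Finset.mem_filter.1 hv).2
      obtain ⟨T, hTsub, hTcard⟩ := Finset.exists_subset_card_eq hvk
      refine Finset.mem_biUnion.2 ⟨v i, Finset.mem_univ _, ?_⟩
      refine Finset.mem_image.2 ⟨i.removeNth v, ?_, Fin.insertNth_self_removeNth ..⟩
      refine Finset.mem_biUnion.2 ⟨T, ?_, ?_⟩
      · refine Finset.mem_powersetCard.2 ⟨?_, hTcard⟩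
        intro x hx
        rcases Finset.mem_image.1 (hTsub hx) with ⟨p, hp, rfl⟩
        exact Finset.mem_filter.2 ⟨Finset.mem_univ _, (Finset.mem_filter.1 hp).2 i⟩
      · refine Finset.mem_filter.2 ⟨Finset.mem_univ _, ?_⟩
        rw [Fin.insertNth_self_removeNth]
        intro x hx
        exact hTsub hx
    have hSTcard : ∀ (c : Fin m) (T : Finset (Fin n)),
        T ∈ (Finset.univ.filter (fun x : Fin n => blk h x = c)).powersetCard k →
        (ST c T).card ≤ cQ := by
      intro c T hT
      have hTcard : T.card = k := (Finset.mem_powersetCard.1 hT).2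
      exact hQ i _ (slab_avoids P hP h M hM i c T hTcard)
    have hpow : ∀ c : Fin m,
        ((Finset.univ.filter (fun x : Fin n => blk h x = c)).powersetCard k).card ≤ 2^s := by
      intro c
      calc ((Finset.univ.filter (fun x : Fin n => blk h x = c)).powersetCard k).card
          ≤ ((Finset.univ.filter (fun x : Fin n => blk h x = c)).powerset).card :=
            Finset.card_le_card (by
              rw [Finset.powersetCard_eq_filter]
              exact Finset.filter_subset _ _)
        _ = 2 ^ (Finset.univ.filter (fun x : Fin n => blk h x = c)).card :=
            Finset.card_powerset _
        _ ≤ 2 ^ s := Nat.pow_le_pow_right (by norm_num) (hrange c)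
    calc (Finset.univ.filter (fun v : Fin (d+1) → Fin m => k ≤ (Vals h M i v).card)).card
        ≤ _ := Finset.card_le_card hsub
      _ ≤ ∑ c : Fin m, ((((Finset.univ.filter (fun x : Fin n => blk h x = c)).powersetCard
            k).biUnion (fun T => ST c T)).image (i.insertNth (α := fun _ => Fin m) c)).card :=
          Finset.card_biUnion_le
      _ ≤ ∑ _c : Fin m, 2^s * cQ := by
          apply Finset.sum_le_sum
          intro c _
          calc ((((Finset.univ.filter (fun x : Fin n => blk h x = c)).powersetCard
                k).biUnion (fun T => ST c T)).image (i.insertNth (α := fun _ => Fin m) c)).card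
              ≤ (((Finset.univ.filter (fun x : Fin n => blk h x = c)).powersetCard
                k).biUnion (fun T => ST c T)).card := Finset.card_image_le
            _ ≤ ∑ T ∈ (Finset.univ.filter (fun x : Fin n => blk h x = c)).powersetCard k,
                (ST c T).card := Finset.card_biUnion_le
            _ ≤ ∑ _T ∈ (Finset.univ.filter (fun x : Fin n => blk h x = c)).powersetCard k,
                cQ := Finset.sum_le_sum (fun T hT => hSTcard c T hT)
            _ = ((Finset.univ.filter (fun x : Fin n => blk h x = c)).powersetCard k).card
                * cQ := by rw [Finset.sum_const, smul_eq_mul]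
            _ ≤ 2^s * cQ := Nat.mul_le_mul_right _ (hpow c)
      _ = m * (2^s * cQ) := by rw [Finset.sum_const, Finset.card_univ, Fintype.card_fin,
            smul_eq_mul]
  -- total broad count
  have hbroadcount : (ctr.filter Bd).card ≤ (d+1) * (m * (2^s * cQ)) := by
    have hsub : ctr.filter Bd ⊆ Finset.univ.biUnion (fun i : Fin (d+1) =>
        Finset.univ.filter (fun v : Fin (d+1) → Fin m => k ≤ (Vals h M i v).card)) := by
      intro v hv
      rcases (Finset.mem_filter.1 hv).2 with ⟨i, hi⟩
      exact Finset.mem_biUnion.2 ⟨i, Finset.mem_univ _,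
        Finset.mem_filter.2 ⟨Finset.mem_univ _, hi⟩⟩
    calc (ctr.filter Bd).card ≤ _ := Finset.card_le_card hsub
      _ ≤ ∑ i : Fin (d+1), (Finset.univ.filter
            (fun v : Fin (d+1) → Fin m => k ≤ (Vals h M i v).card)).card :=
          Finset.card_biUnion_le
      _ ≤ ∑ _i : Fin (d+1), m * (2^s * cQ) := Finset.sum_le_sum (fun i _ => hBBcount i)
      _ = (d+1) * (m * (2^s * cQ)) := by
          rw [Finset.sum_const, Finset.card_univ, Fintype.card_fin, smul_eq_mul]
  -- ctr avoids P, so its card is at most fP m P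
  have hctrcard : ctr.card ≤ fP m P := by
    have havoid : ¬ Contains P ctr := ctr_avoids P hP h M hM
    apply le_csSup
    · refine ⟨Fintype.card (Fin (d+1) → Fin m), ?_⟩
      rintro x ⟨M', _, rfl⟩
      exact Finset.card_le_univ M'
    · exact ⟨ctr, havoid, rfl⟩
  -- assemble
  rw [hsplit]
  have h1 : ∑ v ∈ ctr.filter Bd, (Mblock h M v).card
      ≤ s^(d+1) * ((d+1) * (m * (2^s * cQ))) := by
    calc ∑ v ∈ ctr.filter Bd, (Mblock h M v).card
        ≤ ∑ _v ∈ ctr.filter Bd, s^(d+1) := Finset.sum_le_sum (fun v _ => hbk v)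
      _ = (ctr.filter Bd).card * s^(d+1) := by rw [Finset.sum_const, smul_eq_mul]
      _ ≤ ((d+1) * (m * (2^s * cQ))) * s^(d+1) := Nat.mul_le_mul_right _ hbroadcount
      _ = s^(d+1) * ((d+1) * (m * (2^s * cQ))) := Nat.mul_comm _ _
  have h2 : ∑ v ∈ ctr.filter (fun v => ¬ Bd v), (Mblock h M v).card
      ≤ (k-1)^(d+1) * fP m P := by
    calc ∑ v ∈ ctr.filter (fun v => ¬ Bd v), (Mblock h M v).card
        ≤ ∑ v ∈ ctr.filter (fun v => ¬ Bd v), (k-1)^(d+1) :=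
          Finset.sum_le_sum (fun v hv => hnb v (Finset.mem_filter.1 hv).2)
      _ = (ctr.filter (fun v => ¬ Bd v)).card * (k-1)^(d+1) := by
          rw [Finset.sum_const, smul_eq_mul]
      _ ≤ ctr.card * (k-1)^(d+1) :=
          Nat.mul_le_mul_right _ (Finset.card_le_card (Finset.filter_subset _ _))
      _ ≤ fP m P * (k-1)^(d+1) := Nat.mul_le_mul_right _ hctrcard
      _ = (k-1)^(d+1) * fP m P := Nat.mul_comm _ _
  omega


theorem base1 {k n : ℕ} (P : Finset (Fin 1 → Fin k)) (M : Finset (Fin 1 → Fin n))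
    (hM : ¬ Contains P M) : M.card ≤ k := by
  rcases Nat.eq_zero_or_pos k with hk | hk
  · subst hk
    exfalso
    apply hM
    refine ⟨fun _ => Fin.elim0, fun i => ?_, fun e _ => (e 0).elim0⟩
    intro x y _
    exact x.elim0
  · by_contra hc
    have hk2 : k ≤ M.card := by omega
    have hinj : Set.InjOn (fun p : Fin 1 → Fin n => p 0) M := by
      intro p hp q hq hpq
      funext j
      have hj : j = 0 := Subsingleton.elim j 0
      subst hj
      exact hpq
    have hIcard : (M.image (fun p => p 0)).card = M.card :=
      Finset.card_image_of_injOn hinj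
    have hkle : k ≤ (M.image (fun p => p 0)).card := by rw [hIcard]; exact hk2
    obtain ⟨T, hTsub, hTcard⟩ := Finset.exists_subset_card_eq hkle
    apply hM
    refine ⟨fun _ x => T.orderEmbOfFin hTcard x, fun _ => (T.orderEmbOfFin hTcard).strictMono, ?_⟩
    intro e he
    have hmem : T.orderEmbOfFin hTcard (e 0) ∈ M.image (fun p => p 0) :=
      hTsub (T.orderEmbOfFin_mem hTcard (e 0))
    rcases Finset.mem_image.1 hmem with ⟨q, hq, hqe⟩
    have heq : (fun i => T.orderEmbOfFin hTcard (e i)) = q := by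
      funext i
      have hi : i = 0 := Subsingleton.elim i 0
      subst hi
      exact hqe.symm
    rw [heq]
    exact hq

theorem main : ∀ (d k : ℕ) (P : Finset (Fin (d+1) → Fin k)), IsPerm P →
    ∃ c : ℕ, ∀ n : ℕ, fP n P ≤ c * n ^ d := by
  intro d
  induction d with
  | zero =>
    intro k P _
    exact ⟨k, fun n => by simpa using fP_le P (fun M hM => base1 P M hM)⟩
  | succ e ih =>
    intro k P hP
    rcases Nat.eq_zero_or_pos k with hk | hk
    · subst hk
      refine ⟨0, fun n => ?_⟩
      have h0 : fP n P ≤ 0 := by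
        apply fP_le
        intro M hM
        exfalso
        apply hM
        refine ⟨fun _ => Fin.elim0, fun i => ?_, fun e2 _ => (e2 0).elim0⟩
        intro x y _
        exact x.elim0
      simpa using h0
    · choose cs hcs using fun i : Fin (e+2) => ih k (proj P i) (proj_isPerm hP i)
      obtain ⟨c', hc'⟩ : ∃ c', c' = Finset.univ.sup cs := ⟨_, rfl⟩
      obtain ⟨s, hs_def⟩ : ∃ s, s = 2 * k^2 := ⟨_, rfl⟩
      have hk2 : 1 ≤ k^2 := Nat.one_le_pow _ _ hk
      have hs : 0 < s := by omega
      have hs2 : 2 ≤ s := by omega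
      obtain ⟨A, hA⟩ : ∃ A, A = (k-1)^(e+2) := ⟨_, rfl⟩
      obtain ⟨B, hB⟩ : ∃ B, B = s^(e+2) * ((e+2) * (2^s * c')) := ⟨_, rfl⟩
      obtain ⟨c, hc⟩ : ∃ c, c = 2^(e+1) * B + s := ⟨_, rfl⟩
      refine ⟨c, ?_⟩
      intro n
      induction n using Nat.strong_induction_on with
      | _ n ihn =>
      rcases le_or_gt n s with hns | hns
      · apply fP_le
        intro M _
        have h1 : M.card ≤ n^(e+2) := by
          calc M.card ≤ (Finset.univ : Finset (Fin (e+2) → Fin n)).card := Finset.card_le_univ M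
            _ = n^(e+2) := by simp [Finset.card_univ]
        calc M.card ≤ n^(e+2) := h1
          _ = n * n^(e+1) := by ring
          _ ≤ c * n^(e+1) := Nat.mul_le_mul_right _ (by omega)
      · obtain ⟨m, hm⟩ : ∃ m, m = n / s + 1 := ⟨_, rfl⟩
        have hdms : s * (n/s) ≤ n := by
          rw [Nat.mul_comm]
          exact Nat.div_mul_le_self n s
        have hmod : n % s < s := Nat.mod_lt _ hs
        have hdiv := Nat.div_add_mod n s
        have hexp : s * m = s * (n/s) + s := by rw [hm]; ring
        have hnm : n ≤ s * m := by omega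
        have hmn : m < n := by
          have h2 : n / s ≤ n / 2 := Nat.div_le_div_left hs2 (by norm_num)
          omega
        have hsm2n : s * m ≤ 2 * n := by omega
        have hstep : fP n P ≤ A * fP m P + B * m^(e+1) := by
          apply fP_le
          intro M hM
          have hQ : ∀ (i : Fin (e+2)) (S : Finset (Fin (e+1) → Fin m)),
              ¬ Contains (proj P i) S → S.card ≤ c' * m^e := by
            intro i S hS
            calc S.card ≤ fP m (proj P i) := le_fP _ _ hS
              _ ≤ cs i * m^e := hcs i m
              _ ≤ c' * m^e := Nat.mul_le_mul_right _
                  (by rw [hc']; exact Finset.le_sup (Finset.mem_univ i))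
          calc M.card
              ≤ (k-1)^(e+2) * fP m P + s^(e+2) * ((e+2) * (m * (2^s * (c' * m^e)))) :=
                step hs P hP hnm M hM (c' * m^e) hQ
            _ = A * fP m P + B * m^(e+1) := by rw [hA, hB]; ring
        have hrec := ihn m hmn
        have hABc : 2^(e+1) * A + 2^(e+1) ≤ s^(e+1) := by
          have h1 : (k-1)^(e+2) < k^(e+2) := Nat.pow_lt_pow_left (by omega) (by omega)
          have h2 : k^(e+2) ≤ k^(2*(e+1)) := Nat.pow_le_pow_right hk (by omega)
          have h3 : s^(e+1) = 2^(e+1) * k^(2*(e+1)) := by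
            rw [hs_def, mul_pow, ← pow_mul]
          rw [h3, hA]
          calc 2^(e+1) * (k-1)^(e+2) + 2^(e+1) = 2^(e+1) * ((k-1)^(e+2) + 1) := by ring
            _ ≤ 2^(e+1) * k^(2*(e+1)) := Nat.mul_le_mul_left _ (by omega)
        have hineq : 2^(e+1) * (A*c+B) ≤ s^(e+1) * c := by
          have hc1 : 2^(e+1) * B ≤ c := by omega
          calc 2^(e+1) * (A*c+B) = 2^(e+1) * A * c + 2^(e+1) * B := by ring
            _ ≤ 2^(e+1) * A * c + c := by omega
            _ = (2^(e+1) * A + 1) * c := by ring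
            _ ≤ s^(e+1) * c := by
                apply Nat.mul_le_mul_right
                have h4 : (1:ℕ) ≤ 2^(e+1) := Nat.one_le_pow _ _ (by norm_num)
                omega
        have hkey : (A * c + B) * m^(e+1) ≤ c * n^(e+1) := by
          have hm1 : (s*m)^(e+1) ≤ (2*n)^(e+1) := Nat.pow_le_pow_left hsm2n _
          have hfac : ((A*c + B) * m^(e+1)) * s^(e+1) ≤ (c * n^(e+1)) * s^(e+1) := by
            calc ((A*c+B) * m^(e+1)) * s^(e+1) = (A*c+B) * (s*m)^(e+1) := by
                  rw [mul_pow]; ring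
              _ ≤ (A*c+B) * (2*n)^(e+1) := Nat.mul_le_mul_left _ hm1
              _ = (2^(e+1) * (A*c+B)) * n^(e+1) := by rw [mul_pow]; ring
              _ ≤ (s^(e+1) * c) * n^(e+1) := Nat.mul_le_mul_right _ hineq
              _ = (c * n^(e+1)) * s^(e+1) := by ring
          exact Nat.le_of_mul_le_mul_right hfac (pow_pos hs _)
        calc fP n P ≤ A * fP m P + B * m^(e+1) := hstep
          _ ≤ A * (c * m^(e+1)) + B * m^(e+1) :=
              Nat.add_le_add_right (Nat.mul_le_mul_left _ hrec) _
          _ = (A*c+B) * m^(e+1) := by ring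
          _ ≤ c * n^(e+1) := hkey

end Stmt13

/-- For every fixed `d`-dimensional permutation `P` of `[k]`, `f(n,P,d) = O(n^(d-1))`. -/
theorem stmt13 {d k : ℕ} (P : Finset (Fin d → Fin k)) (hP : IsPerm P) :
    ∃ c : ℕ, ∀ n : ℕ, fP n P ≤ c * n ^ (d - 1) := by
  cases d with
  | zero =>
    refine ⟨1, fun n => ?_⟩
    have h1 : fP n P ≤ 1 := by
      apply Stmt13.fP_le
      intro M _
      calc M.card ≤ (Finset.univ : Finset (Fin 0 → Fin n)).card := Finset.card_le_univ M
        _ = 1 := by simp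
    simpa using h1
  | succ d' =>
    obtain ⟨c, hc⟩ := Stmt13.main d' k P hP
    exact ⟨c, fun n => by simpa using hc n⟩
end

section
/- If g(n,k,d) = O(n^{d−1}) for all k (grid-avoidance bound), then f(n,P,d) = O(n^{d−1}) for every d-dimensional permutation P; conversely, if f(n,P,d) = O(n^{d−1}) for every d-dimensional permutation P, then g(n,k,d) = O(n^{d−1}). -/
/-- `M` is a `d`-dimensional `k`-grid: each coordinate axis partitions into `k`
consecutive intervals (fibers of a monotone surjection onto `Fin k`) so that `M`
has exactly one edge in each of the `k^d` combinatorial boxes. -/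
def IsGrid (k : ℕ) {d : ℕ} {n : Fin d → ℕ} (M : Finset (∀ i, Fin (n i))) : Prop :=
  ∃ b : ∀ i, Fin (n i) → Fin k, (∀ i, Monotone (b i)) ∧ (∀ i, Function.Surjective (b i)) ∧
    ∀ j : Fin d → Fin k, ∃! e, e ∈ M ∧ ∀ i, b i (e i) = j i
/-- `M` contains a `d`-dimensional `k`-grid. -/
def ContainsGrid (k : ℕ) {d n : ℕ} (M : Finset (Fin d → Fin n)) : Prop :=
  ∃ (n' : ℕ) (G : Finset (Fin d → Fin n')), IsGrid k G ∧ Contains G M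

/-- `g(n,k,d)`: maximum size of an `n × ⋯ × n` `d`-dimensional matrix containing no
`d`-dimensional `k`-grid. -/
noncomputable def gG (n k d : ℕ) : ℕ :=
  sSup {m | ∃ M : Finset (Fin d → Fin n), ¬ ContainsGrid k M ∧ M.card = m}

lemma contains_trans {d : ℕ} {k n p : Fin d → ℕ} {A : Finset (∀ i, Fin (k i))}
    {B : Finset (∀ i, Fin (n i))} {M : Finset (∀ i, Fin (p i))}
    (h1 : Contains A B) (h2 : Contains B M) : Contains A M := by
  obtain ⟨f, hf, hfm⟩ := h1
  obtain ⟨g, hg, hgm⟩ := h2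
  exact ⟨fun i => g i ∘ f i, fun i => (hg i).comp (hf i),
    fun e he => hgm _ (hfm e he)⟩

lemma perm_contains {d k n' : ℕ} {P : Finset (Fin d → Fin k)} {G : Finset (Fin d → Fin n')}
    (hP : IsPerm P) (hG : IsGrid k G) : Contains P G := by
  classical
  obtain ⟨b, hmono, _hsurj, hbox⟩ := hG
  let E : Fin d → Fin k → (Fin d → Fin k) := fun i x => (hP i x).choose
  have hE : ∀ i x, E i x ∈ P ∧ E i x i = x := fun i x => (hP i x).choose_spec.1
  let g : (Fin d → Fin k) → (Fin d → Fin n') := fun j => (hbox j).choose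
  have hg : ∀ j, g j ∈ G ∧ ∀ i, b i (g j i) = j i := fun j => (hbox j).choose_spec.1
  refine ⟨fun i x => g (E i x) i, ?_, ?_⟩
  · intro i x y hxy
    have hx : b i (g (E i x) i) = x := by rw [(hg _).2 i, (hE i x).2]
    have hy : b i (g (E i y) i) = y := by rw [(hg _).2 i, (hE i y).2]
    by_contra hle
    push_neg at hle
    have h2 := hmono i hle
    rw [hx, hy] at h2
    exact absurd (lt_of_lt_of_le hxy h2) (lt_irrefl _)
  · intro e heP
    have hEe : ∀ i, E i (e i) = e := fun i =>
      (hP i (e i)).unique ⟨(hE i (e i)).1, (hE i (e i)).2⟩ ⟨heP, rfl⟩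
    have heq : (fun i => g (E i (e i)) i) = g e := funext fun i => by rw [hEe i]
    rw [heq]
    exact (hg e).1

lemma exists_perm_grid (m k : ℕ) :
    ∃ P : Finset (Fin (m+1) → Fin (k^(m+1))), IsPerm P ∧ IsGrid k P := by
  classical
  rcases Nat.eq_zero_or_pos k with rfl | hk
  · have h0 : (0:ℕ)^(m+1) = 0 := zero_pow (by omega)
    refine ⟨∅, fun i x => ((x.cast h0).elim0), ?_⟩
    exact ⟨fun i x => (x.cast h0).elim0, fun i a => (a.cast h0).elim0,
      fun i y => y.elim0, fun j => (j 0).elim0⟩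
  have hKpos : 0 < k ^ m := pow_pos hk m
  have hlt : ∀ (j : Fin (m+1) → Fin k) (i : Fin (m+1)),
      (j i : ℕ) * k ^ m + ((finFunctionFinEquiv (fun t : Fin m => j (i + t.succ))) : ℕ)
        < k ^ (m+1) := by
    intro j i
    have h1 := (j i).isLt
    have h2 := (finFunctionFinEquiv (fun t : Fin m => j (i + t.succ))).isLt
    have h3 : ((j i : ℕ) + 1) * k ^ m ≤ k * k ^ m := Nat.mul_le_mul_right _ (by omega)
    have h4 : k ^ (m+1) = k * k ^ m := by ring
    nlinarith
  set F : (Fin (m+1) → Fin k) → (Fin (m+1) → Fin (k^(m+1))) :=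
    fun j i => ⟨(j i : ℕ) * k ^ m +
      ((finFunctionFinEquiv (fun t : Fin m => j (i + t.succ))) : ℕ), hlt j i⟩ with hF
  have hdigit : ∀ j i, ((F j i : ℕ)) / k ^ m = (j i : ℕ) := by
    intro j i
    show ((j i : ℕ) * k ^ m + _) / k ^ m = (j i : ℕ)
    rw [mul_comm, Nat.mul_add_div hKpos,
      Nat.div_eq_of_lt (finFunctionFinEquiv _).isLt, add_zero]
  have hinj : ∀ i : Fin (m+1), Function.Injective (fun j => F j i) := by
    intro i j j' h
    simp only at h
    have hv : (F j i : ℕ) = (F j' i : ℕ) := congrArg Fin.val h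
    have hji : (j i : ℕ) = (j' i : ℕ) := by rw [← hdigit j i, ← hdigit j' i, hv]
    have hr : ((finFunctionFinEquiv (fun t : Fin m => j (i + t.succ))) : ℕ)
        = ((finFunctionFinEquiv (fun t : Fin m => j' (i + t.succ))) : ℕ) := by
      have hv' : (j i : ℕ) * k ^ m + _ = (j' i : ℕ) * k ^ m + _ := hv
      rw [hji] at hv'
      exact Nat.add_left_cancel hv'
    have hfun : (fun t : Fin m => j (i + t.succ)) = (fun t : Fin m => j' (i + t.succ)) :=
      finFunctionFinEquiv.injective (Fin.val_injective hr)
    funext c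
    rcases eq_or_ne c i with rfl | hne
    · exact Fin.val_injective hji
    · obtain ⟨t, ht⟩ := Fin.exists_succ_eq.mpr (sub_ne_zero.mpr hne)
      have hc : i + t.succ = c := by rw [ht]; exact (add_comm i (c - i)).trans (sub_add_cancel c i)
      have := congrFun hfun t
      rwa [hc] at this
  have hbij : ∀ i : Fin (m+1), Function.Bijective (fun j => F j i) := by
    intro i
    rw [Fintype.bijective_iff_injective_and_card]
    exact ⟨hinj i, by simp⟩
  refine ⟨Finset.univ.image F, ?_, ?_⟩
  · intro i x
    obtain ⟨j, hj⟩ := (hbij i).2 x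
    refine ⟨F j, ⟨Finset.mem_image_of_mem F (Finset.mem_univ j), hj⟩, ?_⟩
    rintro e ⟨heM, hei⟩
    obtain ⟨j', -, rfl⟩ := Finset.mem_image.mp heM
    exact congrArg F (hinj i (hei.trans hj.symm))
  · have hdivlt : ∀ x : Fin (k^(m+1)), (x : ℕ) / k ^ m < k := by
      intro x
      refine (Nat.div_lt_iff_lt_mul hKpos).mpr ?_
      have := x.isLt
      have h4 : k ^ (m+1) = k * k ^ m := by ring
      omega
    refine ⟨fun i x => ⟨(x : ℕ) / k ^ m, hdivlt x⟩, ?_, ?_, ?_⟩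
    · intro i a b hab
      exact Nat.div_le_div_right hab
    · intro i y
      refine ⟨F (fun _ => y) i, ?_⟩
      exact Fin.val_injective (hdigit (fun _ => y) i)
    · intro j
      refine ⟨F j, ⟨Finset.mem_image_of_mem F (Finset.mem_univ j),
        fun i => Fin.val_injective (hdigit j i)⟩, ?_⟩
      rintro e ⟨heM, hbe⟩
      obtain ⟨j', -, rfl⟩ := Finset.mem_image.mp heM
      have : j' = j := funext fun i => Fin.val_injective
        ((hdigit j' i).symm.trans (congrArg Fin.val (hbe i)))
      rw [this]

lemma bdd_card_set {d n : ℕ} (Q : Finset (Fin d → Fin n) → Prop) :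
    BddAbove {m | ∃ M, Q M ∧ M.card = m} := by
  refine ⟨Fintype.card (Fin d → Fin n), ?_⟩
  rintro mm ⟨M, -, rfl⟩
  exact le_trans (Finset.card_le_univ M) (le_of_eq (Finset.card_univ))

/-- The grid-avoidance bound `g(n,k,d) = O(n^(d-1))` for all `k` holds if and only if
`f(n,P,d) = O(n^(d-1))` for every `d`-dimensional permutation `P`. -/
theorem stmt16 (d : ℕ) (hd : 1 ≤ d) :
    (∀ k : ℕ, ∃ c : ℕ, ∀ n : ℕ, gG n k d ≤ c * n ^ (d - 1)) ↔
    (∀ (k : ℕ) (P : Finset (Fin d → Fin k)), IsPerm P →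
      ∃ c : ℕ, ∀ n : ℕ, fP n P ≤ c * n ^ (d - 1)) := by
  constructor
  · intro h k P hP
    obtain ⟨c, hc⟩ := h k
    refine ⟨c, fun n => ?_⟩
    refine csSup_le' ?_
    rintro mm ⟨M, hM, rfl⟩
    have hM' : ¬ ContainsGrid k M := by
      rintro ⟨n', G, hG, hGM⟩
      exact hM (contains_trans (perm_contains hP hG) hGM)
    exact le_trans (le_csSup (bdd_card_set _) ⟨M, hM', rfl⟩) (hc n)
  · intro h k
    obtain ⟨m, rfl⟩ : ∃ m, d = m + 1 := ⟨d - 1, by omega⟩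
    obtain ⟨P, hPerm, hGrid⟩ := exists_perm_grid m k
    obtain ⟨c, hc⟩ := h _ P hPerm
    refine ⟨c, fun n => ?_⟩
    refine csSup_le' ?_
    rintro mm ⟨M, hM, rfl⟩
    have hM' : ¬ Contains P M := fun hcon => hM ⟨_, P, hGrid, hcon⟩
    exact le_trans (le_csSup (bdd_card_set _) ⟨M, hM', rfl⟩) (hc n)
end

section
/- Let π be a permutation of [k] and suppose: (a) the number of P(π)-avoiding hypergraphs H with weight i(H) = w is at most 9^{(3^{2k}+2k)w} for every w; and (b) there is a constant c_4 such that every simple P(π)-avoiding hypergraph H on vertex set contained in [n] satisfies i(H) ≤ c_4·n. Then the number of simple hypergraphs on vertex set [n] avoiding P(π) is at most c_1^n for some constant c_1 = c_1(π) > 1. -/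
/-- Hypergraph containment `H' ≺ H`: there is an increasing injection on vertices
and an injection on edge indices (formalized via a sub-multiset `H''` of `H` and a
multiset relation) such that the image of each edge of `H'` is contained in the
corresponding edge of `H`. -/
def HGContains (H' H : Multiset (Finset ℕ)) : Prop :=
  ∃ f : ℕ → ℕ, StrictMono f ∧
    ∃ H'' ≤ H, Multiset.Rel (fun E' E => E'.image f ⊆ E) H' H''

/-- The permutation graph `P(π)` on vertex set `[2k]` (0-indexed: `{0,…,2k-1}`),
with edges `{i, k + π i}` for `i ∈ [k]`, as a multiset of edges. -/
def permGraph {k : ℕ} (π : Equiv.Perm (Fin k)) : Multiset (Finset ℕ) :=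
  Multiset.map (fun i : Fin k => ({(i : ℕ), k + (π i : ℕ)} : Finset ℕ))
    (Finset.univ : Finset (Fin k)).val

/-- `ex_e(n,F)`: the maximum number of edges of a simple `F`-avoiding hypergraph
whose vertices lie in `[n]`. -/
noncomputable def exE (n : ℕ) (F : Multiset (Finset ℕ)) : ℕ :=
  sSup {m | ∃ H : Finset (Finset ℕ), (∀ E ∈ H, E ≠ ∅) ∧
    (∀ E ∈ H, E ⊆ Finset.range n) ∧ ¬ HGContains F H.val ∧ H.card = m}

/-- `ex_i(n,F)`: the maximum weight (number of incidences) of a simple `F`-avoiding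
hypergraph whose vertices lie in `[n]`. -/
noncomputable def exI (n : ℕ) (F : Multiset (Finset ℕ)) : ℕ :=
  sSup {m | ∃ H : Finset (Finset ℕ), (∀ E ∈ H, E ≠ ∅) ∧
    (∀ E ∈ H, E ⊆ Finset.range n) ∧ ¬ HGContains F H.val ∧ ∑ E ∈ H, E.card = m}

/-- The vertex set of a hypergraph: the union of its edges. -/
def Vset (H : Multiset (Finset ℕ)) : Finset ℕ := H.toFinset.sup id

/-- A hypergraph with nonempty edges has at least as many incidences as edges. -/
lemma card_le_weight (M : Multiset (Finset ℕ)) (h : ∀ E ∈ M, E ≠ ∅) :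
    Multiset.card M ≤ (M.map Finset.card).sum := by
  induction M using Multiset.induction_on with
  | empty => simp
  | cons a s ih =>
    simp only [Multiset.map_cons, Multiset.sum_cons, Multiset.card_cons]
    have ha : 1 ≤ a.card := Finset.card_pos.mpr
      (Finset.nonempty_iff_ne_empty.mpr (h a (Multiset.mem_cons_self a s)))
    have := ih (fun E hE => h E (Multiset.mem_cons_of_mem hE))
    omega

/-- Every edge is contained in the vertex set. -/
lemma edge_subset_vset {M : Multiset (Finset ℕ)} {E : Finset ℕ} (h : E ∈ M) : E ⊆ Vset M :=
  Finset.le_sup (f := id) (Multiset.mem_toFinset.mpr h)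

/-- The number of vertices is at most the weight. -/
lemma vset_card_le (M : Multiset (Finset ℕ)) :
    (Vset M).card ≤ (M.map Finset.card).sum := by
  classical
  calc (Vset M).card ≤ ∑ E ∈ M.toFinset, E.card := by
        rw [Vset, Finset.sup_eq_biUnion]; exact Finset.card_biUnion_le
    _ ≤ ∑ E ∈ M.toFinset, M.count E • E.card := by
        apply Finset.sum_le_sum
        intro E hE
        have h1 : 1 ≤ M.count E := Multiset.count_pos.mpr (Multiset.mem_toFinset.mp hE)
        have : 1 * E.card ≤ M.count E * E.card := Nat.mul_le_mul_right _ h1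
        simpa using this
    _ = (M.map Finset.card).sum := (Finset.sum_multiset_map_count M Finset.card).symm

/-- There are finitely many hypergraphs of a given weight (with nonempty edges and
vertex set an initial segment). -/
lemma finite_weight_set (p : Multiset (Finset ℕ) → Prop) (w : ℕ) :
    Set.Finite {M : Multiset (Finset ℕ) | (∀ E ∈ M, E ≠ ∅) ∧
      (∃ m, Vset M = Finset.range m) ∧ p M ∧ (M.map Finset.card).sum = w} := by
  classical
  set N : Multiset (Finset ℕ) := w • ((Finset.range w).powerset.val) with hN
  have hfin : Set.Finite {M : Multiset (Finset ℕ) | M ≤ N} := by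
    apply Set.Finite.ofFinset N.powerset.toFinset
    intro M
    simp [Multiset.mem_powerset]
  apply hfin.subset
  rintro M ⟨h1, ⟨m, hm⟩, -, h4⟩
  have hsub : ∀ E ∈ M, E ⊆ Finset.range w := by
    intro E hE
    have h5 : E ⊆ Finset.range m := hm ▸ edge_subset_vset hE
    have h6 : m ≤ w := by
      have := vset_card_le M
      rw [hm, Finset.card_range, h4] at this
      exact this
    exact h5.trans (Finset.range_subset_range.mpr h6)
  show M ≤ N
  rw [Multiset.le_iff_count]
  intro E
  by_cases hE : E ∈ M
  · have hmem : E ∈ (Finset.range w).powerset.val := by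
      simp [Finset.mem_powerset, hsub E hE]
    have hcount : Multiset.count E ((Finset.range w).powerset.val) = 1 :=
      Multiset.count_eq_one_of_mem (Finset.range w).powerset.nodup hmem
    have : Multiset.count E M ≤ Multiset.card M := Multiset.count_le_card _ _
    have hcard : Multiset.card M ≤ w := h4 ▸ card_le_weight M h1
    rw [hN, Multiset.count_nsmul, hcount]
    omega
  · simp [Multiset.count_eq_zero_of_notMem hE]

/-- Assuming (a) the number of `P(π)`-avoiding hypergraphs (multisets of nonempty
edges, with vertex set an initial segment of ℕ) of weight `w` is at most
`9^((3^(2k)+2k)·w)`, and (b) every simple `P(π)`-avoiding hypergraph with vertices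
in `[n]` has weight at most `c₄·n`, the number of simple hypergraphs with vertex
set exactly `[n]` avoiding `P(π)` is at most `c₁^n` for some constant `c₁ > 1`. -/
theorem stmt18 {k : ℕ} (π : Equiv.Perm (Fin k)) (c₄ : ℕ)
    (ha : ∀ w : ℕ,
      Nat.card {H : Multiset (Finset ℕ) // (∀ E ∈ H, E ≠ ∅) ∧
          (∃ m : ℕ, Vset H = Finset.range m) ∧
          ¬ HGContains (permGraph π) H ∧ (H.map Finset.card).sum = w} ≤
        9 ^ ((3 ^ (2 * k) + 2 * k) * w))
    (hb : ∀ (n : ℕ) (H : Finset (Finset ℕ)), (∀ E ∈ H, E ≠ ∅) →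
      (∀ E ∈ H, E ⊆ Finset.range n) → ¬ HGContains (permGraph π) H.val →
      ∑ E ∈ H, E.card ≤ c₄ * n) :
    ∃ c₁ : ℕ, 1 < c₁ ∧ ∀ n : ℕ,
      Nat.card {H : Finset (Finset ℕ) // (∀ E ∈ H, E ≠ ∅) ∧
          Vset H.val = Finset.range n ∧ ¬ HGContains (permGraph π) H.val} ≤
        c₁ ^ n := by
  classical
  set K := 3 ^ (2 * k) + 2 * k with hK
  refine ⟨2 ^ (c₄ + 1) * 9 ^ (K * c₄), ?_, ?_⟩
  · have h1 : 1 < 2 ^ (c₄ + 1) := Nat.one_lt_two_pow (by omega)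
    have h2 : 1 ≤ 9 ^ (K * c₄) := Nat.one_le_pow _ _ (by norm_num)
    calc 1 < 2 ^ (c₄ + 1) := h1
      _ = 2 ^ (c₄ + 1) * 1 := (mul_one _).symm
      _ ≤ 2 ^ (c₄ + 1) * 9 ^ (K * c₄) := Nat.mul_le_mul_left _ h2
  · intro n
    let Sw : ℕ → Type := fun w => {M : Multiset (Finset ℕ) // (∀ E ∈ M, E ≠ ∅) ∧
      (∃ m : ℕ, Vset M = Finset.range m) ∧
      ¬ HGContains (permGraph π) M ∧ (M.map Finset.card).sum = w}
    haveI hSfin : ∀ w : ℕ, Finite (Sw w) := fun w =>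
      (finite_weight_set (fun M => ¬ HGContains (permGraph π) M) w).to_subtype
    haveI hSfin' : ∀ w : Fin (c₄ * n + 1), Finite (Sw w.val) := fun w => hSfin w.val
    let A := {H : Finset (Finset ℕ) // (∀ E ∈ H, E ≠ ∅) ∧
      Vset H.val = Finset.range n ∧ ¬ HGContains (permGraph π) H.val}
    have key : ∀ H : A, (∑ E ∈ H.1, E.card) < c₄ * n + 1 := by
      rintro ⟨H, h1, h2, h3⟩
      have hsub : ∀ E ∈ H, E ⊆ Finset.range n := fun E hE =>
        h2 ▸ edge_subset_vset (Finset.mem_val.mpr hE)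
      exact Nat.lt_succ_of_le (hb n H h1 hsub h3)
    let F : A → (w : Fin (c₄ * n + 1)) × Sw w.val := fun H =>
      ⟨⟨∑ E ∈ H.1, E.card, key H⟩,
        ⟨H.1.val, H.2.1, ⟨n, H.2.2.1⟩, H.2.2.2, (Finset.sum_eq_multiset_sum H.1 Finset.card).symm⟩⟩
    have hFinj : Function.Injective F := by
      intro a b hab
      have hv : a.1.val = b.1.val :=
        congrArg (fun t : (w : Fin (c₄ * n + 1)) × Sw w.val => t.2.val) hab
      exact Subtype.ext (Finset.val_injective hv)
    haveI : ∀ w : Fin (c₄ * n + 1), Fintype (Sw w.val) := fun w => Fintype.ofFinite _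
    have hpow : c₄ * n + 1 ≤ 2 ^ ((c₄ + 1) * n) := by
      have h1 : (c₄ + 1) * n < 2 ^ ((c₄ + 1) * n) := Nat.lt_two_pow_self
      have h2 : c₄ * n ≤ (c₄ + 1) * n := Nat.mul_le_mul_right n (by omega)
      omega
    calc Nat.card A ≤ Nat.card ((w : Fin (c₄ * n + 1)) × Sw w.val) :=
          Nat.card_le_card_of_injective F hFinj
      _ = ∑ w : Fin (c₄ * n + 1), Nat.card (Sw w.val) := by
          rw [Nat.card_eq_fintype_card, Fintype.card_sigma]
          exact Finset.sum_congr rfl (fun w _ => (Nat.card_eq_fintype_card).symm)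
      _ ≤ ∑ w : Fin (c₄ * n + 1), 9 ^ (K * w.val) :=
          Finset.sum_le_sum (fun w _ => ha w.val)
      _ ≤ ∑ _w : Fin (c₄ * n + 1), 9 ^ (K * (c₄ * n)) := by
          refine Finset.sum_le_sum (fun w _ => Nat.pow_le_pow_right (by norm_num) ?_)
          exact Nat.mul_le_mul_left K (Nat.le_of_lt_succ w.isLt)
      _ = (c₄ * n + 1) * 9 ^ (K * (c₄ * n)) := by
          rw [Finset.sum_const, Finset.card_univ, Fintype.card_fin, smul_eq_mul]
      _ ≤ 2 ^ ((c₄ + 1) * n) * 9 ^ (K * (c₄ * n)) := Nat.mul_le_mul_right _ hpow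
      _ = (2 ^ (c₄ + 1) * 9 ^ (K * c₄)) ^ n := by
          rw [mul_pow, ← pow_mul, ← pow_mul, mul_assoc]
end

section
/- Let π be a permutation of [k], m = C(2k,2), and let P(π') be obtained from P(π) by replacing every edge with a bundle of k(m−1)+1 parallel edges (realized as a permutation graph with the initial vertices of each bundle forming an interval and likewise the final vertices, positioned as in P(π)). Then P(π') is an m-blow-up of P(π): for every edge coloring of P(π') in which every color is used at most m times, there is a subgraph of P(π') order-isomorphic to P(π) with all edges of distinct colors. -/
/-- The permutation graph `P(π)` on vertex set `[2k]` (0-indexed), with edges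
`{i, k + π i}` for `i ∈ [k]`, as a finite set of edges. -/
def permGraphF {k : ℕ} (π : Equiv.Perm (Fin k)) : Finset (Finset ℕ) :=
  Finset.image (fun i : Fin k => ({(i : ℕ), k + (π i : ℕ)} : Finset ℕ)) Finset.univ

/-- The blow-up graph `P(π')`: every edge of `P(π)` is replaced with a bundle of `b`
parallel edges, the initial vertices of each bundle forming an interval and likewise
the final vertices, positioned as in `P(π)`. It is a permutation graph on `[2kb]`:
the edge of bundle `i` with offset `j` joins `i·b + j` to `k·b + (π i)·b + j`. -/
def blowupGraph {k : ℕ} (π : Equiv.Perm (Fin k)) (b : ℕ) : Finset (Finset ℕ) :=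
  Finset.image
    (fun p : Fin k × Fin b =>
      ({(p.1 : ℕ) * b + (p.2 : ℕ), k * b + (π p.1 : ℕ) * b + (p.2 : ℕ)} : Finset ℕ))
    Finset.univ

/-- One edge of the blow-up: bundle `i`, offset `t`. -/
def Eb {k : ℕ} (π : Equiv.Perm (Fin k)) (b : ℕ) (i : Fin k) (t : Fin b) : Finset ℕ :=
  {(i : ℕ) * b + (t : ℕ), k * b + (π i : ℕ) * b + (t : ℕ)}

lemma Eb_mem {k : ℕ} (π : Equiv.Perm (Fin k)) (b : ℕ) (i : Fin k) (t : Fin b) :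
    Eb π b i t ∈ blowupGraph π b := by
  simp only [blowupGraph, Finset.mem_image]
  exact ⟨(i, t), Finset.mem_univ _, rfl⟩

lemma Eb_lt {k : ℕ} (b : ℕ) (i : Fin k) (t : Fin b) : (i : ℕ) * b + (t : ℕ) < k * b := by
  calc (i : ℕ) * b + (t : ℕ) < (i : ℕ) * b + b := by omega
    _ = ((i : ℕ) + 1) * b := by ring
    _ ≤ k * b := mul_le_mul_left (Nat.succ_le_of_lt i.isLt) b

lemma Eb_inj {k : ℕ} (π : Equiv.Perm (Fin k)) (b : ℕ) (i : Fin k) {t t' : Fin b}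
    (h : Eb π b i t = Eb π b i t') : t = t' := by
  have hmem : (i : ℕ) * b + (t : ℕ) ∈ Eb π b i t' := by
    rw [← h]; simp [Eb]
  simp only [Eb, Finset.mem_insert, Finset.mem_singleton] at hmem
  have hlt := Eb_lt b i t
  rcases hmem with h1 | h1
  · exact Fin.ext (by omega)
  · omega

/-- With `m = C(2k,2)` and bundle size `k(m-1)+1`, the graph `P(π')` is an
`m`-blow-up of `P(π)`: for every edge coloring of `P(π')` in which each color is
used at most `m` times there is a subgraph of `P(π')` order-isomorphic to `P(π)`
(a copy of `P(π)` under a strictly increasing vertex map) whose edges receive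
pairwise distinct colors. -/
theorem stmt19 {k : ℕ} (π : Equiv.Perm (Fin k)) (χ : Finset ℕ → ℕ)
    (hχ : ∀ c : ℕ,
      ((blowupGraph π (k * (Nat.choose (2 * k) 2 - 1) + 1)).filter
          (fun E => χ E = c)).card ≤ Nat.choose (2 * k) 2) :
    ∃ f : ℕ → ℕ, StrictMono f ∧
      (permGraphF π).image (fun E => E.image f) ⊆
        blowupGraph π (k * (Nat.choose (2 * k) 2 - 1) + 1) ∧
      Set.InjOn χ ↑((permGraphF π).image (fun E => E.image f)) := by
  classical
  set m := Nat.choose (2 * k) 2 with hm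
  set b := k * (m - 1) + 1 with hbdef
  have hb1 : 1 ≤ b := Nat.le_add_left 1 _
  by_cases hk : k = 0
  · subst hk
    refine ⟨id, strictMono_id, ?_, ?_⟩ <;> simp [permGraphF]
  have hkpos : 0 < k := Nat.pos_of_ne_zero hk
  have hm2 : m = k * (2 * k - 1) := by
    rw [hm, Nat.choose_two_right, mul_assoc, Nat.mul_div_cancel_left _ two_pos]
  have hmk : k ≤ m := by
    rw [hm2]
    calc k = k * 1 := (mul_one k).symm
      _ ≤ k * (2 * k - 1) := Nat.mul_le_mul_left k (by omega)
  -- arithmetic: room for greedy choice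
  have hlt : ∀ n : ℕ, n + 1 ≤ k → n * m < b := by
    intro n hn
    have h1 : n * m ≤ (k - 1) * m := Nat.mul_le_mul_right m (by omega)
    have h2 : (k - 1) * m + m = k * m := by
      have hk1 : (k - 1) + 1 = k := by omega
      calc (k - 1) * m + m = ((k - 1) + 1) * m := by ring
        _ = k * m := by rw [hk1]
    have h3 : k * (m - 1) + k = k * m := by
      have hm1 : (m - 1) + 1 = m := by omega
      calc k * (m - 1) + k = k * ((m - 1) + 1) := by ring
        _ = k * m := by rw [hm1]
    rw [hbdef]
    linarith
  -- counting: each color hits each bundle at most m times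
  have count : ∀ (i : Fin k) (c : ℕ),
      (Finset.univ.filter (fun t : Fin b => χ (Eb π b i t) = c)).card ≤ m := by
    intro i c
    refine le_trans (Finset.card_le_card_of_injOn (fun t => Eb π b i t) ?_ ?_) (hχ c)
    · intro t ht
      simp only [Finset.mem_coe, Finset.mem_filter, Finset.mem_univ, true_and] at ht
      exact Finset.mem_filter.2 ⟨Eb_mem π b i t, ht⟩
    · exact fun t _ t' _ h => Eb_inj π b i h
  -- greedy selection of offsets with pairwise distinct colors
  have sel : ∀ n : ℕ, n ≤ k → ∃ j : Fin k → Fin b,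
      ∀ i i' : Fin k, (i : ℕ) < n → (i' : ℕ) < n →
        χ (Eb π b i (j i)) = χ (Eb π b i' (j i')) → i = i' := by
    intro n
    induction n with
    | zero =>
        intro _
        exact ⟨fun _ => ⟨0, by omega⟩, fun i i' h _ _ => absurd h (Nat.not_lt_zero _)⟩
    | succ n ih =>
        intro hn
        obtain ⟨j, hj⟩ := ih (by omega)
        have hnk : n < k := by omega
        set I : Fin k := ⟨n, hnk⟩ with hI
        set S : Finset (Fin k) := Finset.univ.filter (fun i : Fin k => (i : ℕ) < n) with hS
        set B : Finset (Fin b) := Finset.univ.filter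
          (fun t => ∃ i : Fin k, (i : ℕ) < n ∧ χ (Eb π b I t) = χ (Eb π b i (j i))) with hB
        have hBsub : B ⊆ S.biUnion
            (fun i => Finset.univ.filter fun t' => χ (Eb π b I t') = χ (Eb π b i (j i))) := by
          intro t' ht'
          simp only [hB, Finset.mem_filter, Finset.mem_univ, true_and] at ht'
          obtain ⟨i, hi1, hi2⟩ := ht'
          simp only [Finset.mem_biUnion, hS, Finset.mem_filter, Finset.mem_univ, true_and]
          exact ⟨i, hi1, hi2⟩
        have hScard : S.card ≤ n := by
          have h : S.card ≤ (Finset.range n).card :=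
            Finset.card_le_card_of_injOn (fun i : Fin k => (i : ℕ))
              (fun x hx => by
                simp only [hS, Finset.mem_filter, Finset.mem_univ, true_and] at hx
                simpa using hx)
              (fun x _ y _ h => Fin.ext h)
          simpa using h
        have hBcard : B.card < b := by
          calc B.card ≤ (S.biUnion
              (fun i => Finset.univ.filter fun t' =>
                χ (Eb π b I t') = χ (Eb π b i (j i)))).card := Finset.card_le_card hBsub
            _ ≤ ∑ i ∈ S, (Finset.univ.filter fun t' =>
                χ (Eb π b I t') = χ (Eb π b i (j i))).card := Finset.card_biUnion_le
            _ ≤ S.card • m := Finset.sum_le_card_nsmul _ _ _ (fun i _ => count I _)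
            _ = S.card * m := by rw [smul_eq_mul]
            _ ≤ n * m := Nat.mul_le_mul_right m hScard
            _ < b := hlt n hn
        have hcompl : (Bᶜ).Nonempty := by
          rw [← Finset.card_pos, Finset.card_compl, Fintype.card_fin]
          omega
        obtain ⟨t, ht⟩ := hcompl
        have htB : t ∉ B := by simpa using ht
        refine ⟨Function.update j I t, ?_⟩
        have hupd : ∀ x : Fin k, (x : ℕ) < n → Function.update j I t x = j x := by
          intro x hx
          apply Function.update_of_ne
          intro hxe
          rw [hxe] at hx
      -- (↑I = n)
          simp [hI] at hx
        have hIt : Function.update j I t I = t := Function.update_self I t j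
        intro i i' h1 h2 hcol
        have hne : ∀ x : Fin k, (x : ℕ) < n + 1 → x ≠ I → (x : ℕ) < n := by
          intro x hx hxe
          have : (x : ℕ) ≠ n := fun h => hxe (Fin.ext (by simp [hI, h]))
          omega
        by_cases hi : i = I <;> by_cases hi' : i' = I
        · rw [hi, hi']
        · exfalso
          apply htB
          have hi'n : (i' : ℕ) < n := hne i' h2 hi'
          rw [hi, hIt, hupd i' hi'n] at hcol
          simp only [hB, Finset.mem_filter, Finset.mem_univ, true_and]
          exact ⟨i', hi'n, hcol⟩
        · exfalso
          apply htB
          have hin : (i : ℕ) < n := hne i h1 hi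
          rw [hi', hIt, hupd i hin] at hcol
          simp only [hB, Finset.mem_filter, Finset.mem_univ, true_and]
          exact ⟨i, hin, hcol.symm⟩
        · have hin : (i : ℕ) < n := hne i h1 hi
          have hi'n : (i' : ℕ) < n := hne i' h2 hi'
          rw [hupd i hin, hupd i' hi'n] at hcol
          exact hj i i' hin hi'n hcol
  obtain ⟨j, hj⟩ := sel k le_rfl
  -- the vertex map
  set o : ℕ → ℕ := fun n =>
    if h : n < k then ((j ⟨n, h⟩ : Fin b) : ℕ)
    else if h2 : n - k < k then ((j (π.symm ⟨n - k, h2⟩) : Fin b) : ℕ) else 0 with ho_def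
  set f : ℕ → ℕ := fun n => n * b + o n with hf_def
  have ho_lt : ∀ n, o n < b := by
    intro n
    rw [ho_def]
    dsimp only
    split_ifs
    · exact (j _).isLt
    · exact (j _).isLt
    · omega
  have ho1 : ∀ i : Fin k, o (i : ℕ) = (j i : ℕ) := by
    intro i
    rw [ho_def]
    dsimp only
    rw [dif_pos i.isLt]
  have ho2 : ∀ i : Fin k, o (k + (π i : ℕ)) = (j i : ℕ) := by
    intro i
    have hx : k + (π i : ℕ) - k < k := by have := (π i).isLt; omega
    rw [ho_def]
    dsimp only
    rw [dif_neg (by omega : ¬ k + (π i : ℕ) < k), dif_pos hx]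
    have he : (⟨k + (π i : ℕ) - k, hx⟩ : Fin k) = π i := Fin.ext (show k + (π i : ℕ) - k = (π i : ℕ) by omega)
    rw [he, Equiv.symm_apply_apply]
  have hmono : StrictMono f := by
    apply strictMono_nat_of_lt_succ
    intro n
    rw [hf_def]
    dsimp only
    have h1 := ho_lt n
    calc n * b + o n < n * b + b := by omega
      _ = (n + 1) * b := by ring
      _ ≤ (n + 1) * b + o (n + 1) := Nat.le_add_right _ _
  have himg : ∀ i : Fin k,
      ({(i : ℕ), k + (π i : ℕ)} : Finset ℕ).image f = Eb π b i (j i) := by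
    intro i
    rw [Finset.image_insert, Finset.image_singleton]
    rw [hf_def]
    dsimp only
    rw [ho1 i, ho2 i]
    simp [Eb, add_mul]
  refine ⟨f, hmono, ?_, ?_⟩
  · intro x hx
    simp only [Finset.mem_image] at hx
    obtain ⟨e, he, rfl⟩ := hx
    simp only [permGraphF, Finset.mem_image, Finset.mem_univ, true_and] at he
    obtain ⟨i, rfl⟩ := he
    rw [himg i]
    exact Eb_mem π b i (j i)
  · intro x hx y hy hxy
    simp only [Finset.coe_image, Set.mem_image, Finset.mem_coe, Finset.coe_image] at hx hy
    simp only [permGraphF, Finset.coe_image, Set.mem_image, Finset.mem_coe,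
      Finset.mem_image, Finset.mem_univ, true_and] at hx hy
    obtain ⟨e1, ⟨i1, rfl⟩, rfl⟩ := hx
    obtain ⟨e2, ⟨i2, rfl⟩, rfl⟩ := hy
    rw [himg i1, himg i2] at hxy ⊢
    rw [hj i1 i2 i1.isLt i2.isLt hxy]
end
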